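/- Let F be a field and let C = Σ_{i=1}^{T} Π_{j=1}^{n} Q_{i,j} where for each i the polynomials Q_{i,1}, …, Q_{i,n} ∈ F[x_1,…,x_N] are homogeneous with Σ_{j=1}^n deg(Q_{i,j}) = n, and every monomial appearing in any Q_{i,j} has support at most s. Then for all positive integers r ≤ n, ℓ, m satisfying m + rs ≤ N/2 and m + rs ≤ ℓ/2: Dim(⟨∂^r C⟩_{(ℓ,m)}) ≤ T·(n−r+1)·(rs+1)·C(n+r, r)·C(N, m+rs)·C(ℓ+n−r−1, m+rs−1), where C(a,b) denotes the binomial coefficient. -/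

import Mathlib

/-!
Every `r`-th order derivative of `∏ⱼ Qⱼ` is a combination of terms `x^c ∏_{j ∈ A} Qⱼ` with at
most `r` factors removed: a first-order derivative either lowers the monomial `x^c` or replaces a
factor `Qⱼ` by one of its lowered monomials, so `x^c` keeps support at most `r s`. After a shift
by `x^e` of degree `ℓ` and support `m`, the monomial has support between `m` and `m + r s`, and
its degree is fixed by `A` through homogeneity. There are at most `C(n + r, r)` choices of `A`,
and a monomial of degree `d` with `t` variables is a `t`-subset of the variables together with a
composition of `d` into `t` parts, so there are at most `C(N, t) C(d - 1, t - 1)` of them; the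
hypotheses `2 (m + r s) ≤ N, ℓ` keep both binomials in their increasing range.
-/

open MvPolynomial

/-- Iterated partial derivative along a list of variables. -/
noncomputable def derivList {σ F : Type*} [CommSemiring F]
    (L : List σ) (P : MvPolynomial σ F) : MvPolynomial σ F :=
  L.foldr (fun x Q => MvPolynomial.pderiv x Q) P

/-- The partial derivative `∂_γ P` with respect to the monomial with exponent vector `γ`
(first-order partial derivatives iterated according to the exponent vector). -/
noncomputable def derivMon {σ F : Type*} [CommSemiring F]
    (γ : σ →₀ ℕ) (P : MvPolynomial σ F) : MvPolynomial σ F :=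
  derivList (Finsupp.toMultiset γ).toList P

/-- The degree of a monomial given by its exponent vector. -/
def monDeg {σ : Type*} (e : σ →₀ ℕ) : ℕ := e.sum fun _ c => c

/-- The space `⟨∂^r P⟩_{(ℓ,m)}` of support-`m` degree-`ℓ` shifted partial derivatives of
order `r` of `P`: the span of all `x^e · ∂_γ P` with `deg x^e = ℓ`, `supp x^e = m`,
`deg γ = r`. -/
noncomputable def shiftedSpan {σ F : Type*} [CommSemiring F]
    (r ℓ m : ℕ) (P : MvPolynomial σ F) : Submodule F (MvPolynomial σ F) :=
  Submodule.span F { Q | ∃ e γ : σ →₀ ℕ, monDeg e = ℓ ∧ e.support.card = m ∧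
    monDeg γ = r ∧ Q = MvPolynomial.monomial e (1 : F) * derivMon γ P }

open Finset

theorem Nat.choose_le_choose_of_two_mul_le {n a b : ℕ} (hab : a ≤ b) (h : 2 * b ≤ n) :
    n.choose a ≤ n.choose b := by
  induction b, hab using Nat.le_induction with
  | base => rfl
  | succ k _ ih => exact (ih (by omega)).trans (Nat.choose_le_succ_of_lt_half_left (by omega))

theorem Nat.sum_range_choose_le_add_choose (n r : ℕ) :
    ∑ j ∈ range (r + 1), n.choose j ≤ (n + r).choose r := by
  induction r with
  | zero => simp
  | succ k ih =>
    rw [sum_range_succ, ← Nat.add_assoc, Nat.choose_succ_succ']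
    have := Nat.choose_le_choose (k + 1) (Nat.le_add_right n k)
    omega

theorem Finset.card_filter_card_compl_le {ι : Type*} [Fintype ι] [DecidableEq ι] (r : ℕ) :
    #{A : Finset ι | #Aᶜ ≤ r} ≤ (Fintype.card ι + r).choose r := by
  have hsub : ({A : Finset ι | #Aᶜ ≤ r} : Finset (Finset ι)) ⊆
      ((range (r + 1)).biUnion fun j => (univ : Finset ι).powersetCard j).image compl := by
    intro A hA
    rw [mem_filter] at hA
    exact mem_image.mpr ⟨Aᶜ, mem_biUnion.mpr ⟨#Aᶜ, mem_range.mpr (by omega),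
      mem_powersetCard.mpr ⟨subset_univ _, rfl⟩⟩, compl_compl A⟩
  calc #{A : Finset ι | #Aᶜ ≤ r}
      ≤ ∑ j ∈ range (r + 1), #((univ : Finset ι).powersetCard j) :=
        (card_le_card hsub).trans (card_image_le.trans card_biUnion_le)
    _ = ∑ j ∈ range (r + 1), (Fintype.card ι).choose j := by simp
    _ ≤ (Fintype.card ι + r).choose r := Nat.sum_range_choose_le_add_choose _ r

theorem Finsupp.card_support_le_degree {σ : Type*} (c : σ →₀ ℕ) : #c.support ≤ c.degree := by
  rw [Finset.card_eq_sum_ones, degree_apply]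
  refine Finset.sum_le_sum fun i hi => ?_
  exact Nat.one_le_iff_ne_zero.mpr (mem_support_iff.mp hi)

theorem Finsupp.degree_tsub_single_add_one {σ : Type*} {v : σ →₀ ℕ} {x : σ} (hvx : v x ≠ 0) :
    (v - Finsupp.single x 1).degree + 1 = v.degree := by
  conv_rhs => rw [← tsub_add_cancel_of_le
    (Finsupp.single_le_iff.mpr (Nat.one_le_iff_ne_zero.mpr hvx) : Finsupp.single x 1 ≤ v)]
  rw [map_add, Finsupp.degree_single]

namespace Finset

variable {σ : Type*}

theorem mem_univ_finsuppAntidiag [Fintype σ] [DecidableEq σ] {c : σ →₀ ℕ} {d : ℕ} :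
    c ∈ (univ : Finset σ).finsuppAntidiag d ↔ c.degree = d := by
  simp [Finsupp.degree_eq_sum]

variable [Fintype σ] [DecidableEq σ]

/-- Subtracting one from every exponent of a monomial with support `S` and degree `d` leaves a
monomial supported in `S` of degree `d - #S`: stars and bars. -/
theorem card_finsuppAntidiag_filter_support_eq_le (d : ℕ) {S : Finset σ} (hS : S.Nonempty) :
    #{c ∈ (univ : Finset σ).finsuppAntidiag d | c.support = S} ≤ (d - 1).choose (#S - 1) := by
  set U := {c ∈ (univ : Finset σ).finsuppAntidiag d | c.support = S}
  have hU : ∀ c ∈ U, c.degree = d ∧ ∀ i, i ∈ S ↔ c i ≠ 0 := by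
    intro c hc
    rw [mem_filter, mem_univ_finsuppAntidiag] at hc
    exact ⟨hc.1, fun i => hc.2 ▸ Finsupp.mem_support_iff⟩
  rcases U.eq_empty_or_nonempty with hU_empty | ⟨c₀, hc₀⟩
  · simp [hU_empty]
  have hSd : #S ≤ d := by
    have := Finsupp.card_support_le_degree c₀
    rwa [(mem_filter.mp hc₀).2, (hU c₀ hc₀).1] at this
  calc #U ≤ #(S.finsuppAntidiag (d - #S)) := by
        refine card_le_card_of_injOn (Finsupp.mapRange (· - 1) (Nat.zero_sub 1)) ?_ ?_
        · intro c hc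
          obtain ⟨hdeg, hS_iff⟩ := hU c hc
          rw [mem_coe, mem_finsuppAntidiag]
          refine ⟨?_, Finsupp.support_mapRange.trans (mem_filter.mp hc).2.subset⟩
          change ∑ i ∈ S, (c i - 1) = d - #S
          rw [sum_tsub_distrib _ fun i hi => Nat.one_le_iff_ne_zero.mpr ((hS_iff i).mp hi),
            sum_const, smul_eq_mul, mul_one, ← (mem_filter.mp hc).2, ← Finsupp.degree_apply,
            hdeg]
        · intro c hc c' hc' h
          ext i
          have hi := congrArg (· i) h
          simp only [Finsupp.mapRange_apply] at hi
          by_cases hiS : i ∈ S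
          · have := ((hU c hc).2 i).mp hiS
            have := ((hU c' hc').2 i).mp hiS
            omega
          · rw [of_not_not (mt ((hU c hc).2 i).mpr hiS), of_not_not (mt ((hU c' hc').2 i).mpr hiS)]
    _ = (d - 1).choose (#S - 1) := by
        have := hS.card_pos
        rw [card_finsuppAntidiag_nat_eq_choose, show #S + (d - #S) - 1 = d - 1 by omega]
        exact Nat.choose_symm_of_eq_add (by omega)

theorem card_finsuppAntidiag_filter_card_support_eq_le (d : ℕ) {t : ℕ} (ht : 1 ≤ t) :
    #{c ∈ (univ : Finset σ).finsuppAntidiag d | #c.support = t} ≤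
      (Fintype.card σ).choose t * (d - 1).choose (t - 1) := by
  have hsub : {c ∈ (univ : Finset σ).finsuppAntidiag d | #c.support = t} ⊆
      ((univ : Finset σ).powersetCard t).biUnion
        fun S => {c ∈ (univ : Finset σ).finsuppAntidiag d | c.support = S} := by
    intro c hc
    rw [mem_filter] at hc
    exact mem_biUnion.mpr ⟨c.support, mem_powersetCard.mpr ⟨subset_univ _, hc.2⟩,
      mem_filter.mpr ⟨hc.1, rfl⟩⟩
  calc _ ≤ ∑ S ∈ (univ : Finset σ).powersetCard t,
        #{c ∈ (univ : Finset σ).finsuppAntidiag d | c.support = S} :=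
        (card_le_card hsub).trans card_biUnion_le
    _ ≤ ∑ _S ∈ (univ : Finset σ).powersetCard t, (d - 1).choose (t - 1) := by
        refine sum_le_sum fun S hS => ?_
        obtain ⟨-, hSt⟩ := mem_powersetCard.mp hS
        have := card_finsuppAntidiag_filter_support_eq_le d (S := S) (card_pos.mp (by omega))
        rwa [hSt] at this
    _ = _ := by rw [sum_const, card_powersetCard, card_univ, smul_eq_mul]

theorem card_finsuppAntidiag_filter_card_support_mem_Icc_le {d D a w : ℕ} (ha : 1 ≤ a) (hd : d ≤ D)
    (hσ : 2 * (a + w) ≤ Fintype.card σ) (hD : 2 * (a + w - 1) ≤ D - 1) :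
    #{c ∈ (univ : Finset σ).finsuppAntidiag d | #c.support ∈ Icc a (a + w)} ≤
      (w + 1) * ((Fintype.card σ).choose (a + w) * (D - 1).choose (a + w - 1)) := by
  have hsub : {c ∈ (univ : Finset σ).finsuppAntidiag d | #c.support ∈ Icc a (a + w)} ⊆
      (Icc a (a + w)).biUnion
        fun t => {c ∈ (univ : Finset σ).finsuppAntidiag d | #c.support = t} := by
    intro c hc
    rw [mem_filter] at hc
    exact mem_biUnion.mpr ⟨_, hc.2, mem_filter.mpr ⟨hc.1, rfl⟩⟩
  calc _ ≤ ∑ t ∈ Icc a (a + w), #{c ∈ (univ : Finset σ).finsuppAntidiag d | #c.support = t} :=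
        (card_le_card hsub).trans card_biUnion_le
    _ ≤ ∑ _t ∈ Icc a (a + w),
          (Fintype.card σ).choose (a + w) * (D - 1).choose (a + w - 1) := by
        refine sum_le_sum fun t ht => ?_
        obtain ⟨hat, htw⟩ := mem_Icc.mp ht
        refine (card_finsuppAntidiag_filter_card_support_eq_le d (ha.trans hat)).trans
          (Nat.mul_le_mul ?_ ?_)
        · exact Nat.choose_le_choose_of_two_mul_le htw hσ
        · exact (Nat.choose_le_choose (t - 1) (by omega : d - 1 ≤ D - 1)).trans
            (Nat.choose_le_choose_of_two_mul_le (by omega) hD)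
    _ = _ := by rw [sum_const, Nat.card_Icc, smul_eq_mul, show a + w + 1 - a = w + 1 by omega]

end Finset

theorem Submodule.apply_mem_of_mem_span {R M N : Type*} [Semiring R] [AddCommMonoid M]
    [AddCommMonoid N] [Module R M] [Module R N] (f : M →ₗ[R] N) {s : Set M}
    {p : Submodule R N} (h : ∀ y ∈ s, f y ∈ p) {x : M} (hx : x ∈ Submodule.span R s) :
    f x ∈ p :=
  (Submodule.map_span_le f s p).mpr h (Submodule.mem_map_of_mem hx)

section Derivatives

variable {R σ : Type*} [CommSemiring R]

theorem monDeg_eq_degree (e : σ →₀ ℕ) : monDeg e = e.degree := rfl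

theorem derivList_sum {ι : Type*} (L : List σ) (I : Finset ι) (P : ι → MvPolynomial σ R) :
    derivList L (∑ i ∈ I, P i) = ∑ i ∈ I, derivList L (P i) := by
  induction L with
  | nil => rfl
  | cons x L ih => exact (congrArg (pderiv x) ih).trans (map_sum _ _ _)

theorem derivMon_sum {ι : Type*} (γ : σ →₀ ℕ) (I : Finset ι) (P : ι → MvPolynomial σ R) :
    derivMon γ (∑ i ∈ I, P i) = ∑ i ∈ I, derivMon γ (P i) :=
  derivList_sum _ I P

theorem shiftedSpan_sum_le {ι : Type*} (r ℓ m : ℕ) (I : Finset ι) (P : ι → MvPolynomial σ R) :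
    shiftedSpan r ℓ m (∑ i ∈ I, P i) ≤ ⨆ i ∈ I, shiftedSpan r ℓ m (P i) := by
  refine Submodule.span_le.mpr ?_
  rintro _ ⟨e, γ, he, hem, hγ, rfl⟩
  rw [derivMon_sum, Finset.mul_sum]
  refine Submodule.sum_mem _ fun i hi => ?_
  exact Submodule.mem_iSup_of_mem i (Submodule.mem_iSup_of_mem hi
    (Submodule.subset_span ⟨e, γ, he, hem, hγ, rfl⟩))

end Derivatives

namespace MvPolynomial

variable {R σ : Type*} [CommSemiring R]

theorem pderiv_prod {ι : Type*} [DecidableEq ι] (x : σ) (A : Finset ι)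
    (f : ι → MvPolynomial σ R) :
    pderiv x (∏ j ∈ A, f j) = ∑ j ∈ A, pderiv x (f j) * ∏ l ∈ A.erase j, f l := by
  induction A using Finset.induction_on with
  | empty => simp
  | insert a A ha ih =>
    rw [Finset.prod_insert ha, pderiv_mul, ih, Finset.sum_insert ha, Finset.erase_insert ha,
      Finset.mul_sum]
    congr 1
    refine Finset.sum_congr rfl fun j hj => ?_
    rw [Finset.erase_insert_of_ne (ne_of_mem_of_not_mem hj ha).symm,
      Finset.prod_insert fun h => ha (Finset.mem_of_mem_erase h)]
    ring

theorem pderiv_mem_span_monomial (x : σ) (p : MvPolynomial σ R) :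
    pderiv x p ∈ Submodule.span R
      ((fun v => monomial (v - Finsupp.single x 1) (1 : R)) '' {v | v ∈ p.support ∧ v x ≠ 0}) := by
  have hp : pderiv x p = ∑ v ∈ p.support, pderiv x (monomial v (coeff v p)) := by
    rw [← map_sum, support_sum_monomial_coeff]
  rw [hp]
  refine Submodule.sum_mem _ fun v hv => ?_
  rw [pderiv_monomial]
  by_cases hvx : v x = 0
  · simp [hvx]
  · rw [← mul_one (coeff v p * _), ← smul_eq_mul, ← smul_monomial]
    exact Submodule.smul_mem _ _ (Submodule.subset_span ⟨v, ⟨hv, hvx⟩, rfl⟩)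

end MvPolynomial

section ProdDeriv

variable {R σ ι : Type*} [CommSemiring R] [Fintype ι] [DecidableEq ι]
  (Q : ι → MvPolynomial σ R) (dg : ι → ℕ) (s : ℕ)

def prodDerivGenerators (k : ℕ) : Set (MvPolynomial σ R) :=
  {g | ∃ (A : Finset ι) (c : σ →₀ ℕ), #Aᶜ ≤ k ∧ #c.support ≤ #Aᶜ * s ∧
    c.degree + ∑ j ∈ A, dg j + k = ∑ j, dg j ∧ g = monomial c 1 * ∏ j ∈ A, Q j}

variable {Q dg s}

theorem pderiv_mem_span_prodDerivGenerators (hhom : ∀ j, (Q j).IsHomogeneous (dg j))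
    (hs : ∀ j, ∀ u ∈ (Q j).support, #u.support ≤ s) (x : σ) {k : ℕ} {g : MvPolynomial σ R}
    (hg : g ∈ prodDerivGenerators Q dg s k) :
    pderiv x g ∈ Submodule.span R (prodDerivGenerators Q dg s (k + 1)) := by
  classical
  obtain ⟨A, c, hA, hc, hdeg, rfl⟩ := hg
  rw [pderiv_mul, pderiv_prod, Finset.mul_sum]
  refine add_mem ?_ (Submodule.sum_mem _ fun j hj => ?_)
  · refine Submodule.apply_mem_of_mem_span (LinearMap.mulRight R (∏ j ∈ A, Q j)) ?_
      (pderiv_mem_span_monomial x _)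
    rintro _ ⟨v, ⟨hv, hvx⟩, rfl⟩
    obtain rfl : v = c := Finset.mem_singleton.mp (support_monomial_subset hv)
    have := Finsupp.degree_tsub_single_add_one hvx
    exact Submodule.subset_span ⟨A, v - Finsupp.single x 1, by omega,
      (Finset.card_le_card Finsupp.support_tsub).trans hc, by omega, rfl⟩
  · refine Submodule.apply_mem_of_mem_span (LinearMap.mulLeft R (monomial c 1) ∘ₗ
      LinearMap.mulRight R (∏ l ∈ A.erase j, Q l)) ?_ (pderiv_mem_span_monomial x (Q j))
    rintro _ ⟨v, ⟨hv, hvx⟩, rfl⟩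
    have hv_deg : v.degree = dg j :=
      of_not_not fun h => mem_support_iff.mp hv ((hhom j).coeff_eq_zero h)
    have hv_supp : #(v - Finsupp.single x 1).support ≤ s :=
      (Finset.card_le_card Finsupp.support_tsub).trans (hs j v hv)
    have hc_supp : #(c + (v - Finsupp.single x 1)).support ≤ #c.support + s :=
      (Finset.card_le_card Finsupp.support_add).trans (Finset.card_union_le _ _) |>.trans
        (by omega)
    have hcompl : #(A.erase j)ᶜ = #Aᶜ + 1 := by
      rw [Finset.compl_erase, Finset.card_insert_of_notMem (by simpa using hj)]
    have hsum := Finset.add_sum_erase A dg hj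
    have := Finsupp.degree_tsub_single_add_one hvx
    refine Submodule.subset_span ⟨A.erase j, c + (v - Finsupp.single x 1), by omega,
      by rw [hcompl, add_mul, one_mul]; omega, by rw [map_add]; omega, ?_⟩
    simp only [LinearMap.coe_comp, Function.comp_apply, LinearMap.mulRight_apply,
      LinearMap.mulLeft_apply, ← mul_assoc, monomial_mul, mul_one]

theorem derivList_prod_mem_span_prodDerivGenerators (hhom : ∀ j, (Q j).IsHomogeneous (dg j))
    (hs : ∀ j, ∀ u ∈ (Q j).support, #u.support ≤ s) (L : List σ) :
    derivList L (∏ j, Q j) ∈ Submodule.span R (prodDerivGenerators Q dg s L.length) := by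
  induction L with
  | nil =>
    refine Submodule.subset_span ⟨Finset.univ, 0, by simp, by simp, by simp, ?_⟩
    simp [derivList]
  | cons x L ih =>
    exact Submodule.apply_mem_of_mem_span (pderiv x).toLinearMap
      (fun g hg => pderiv_mem_span_prodDerivGenerators hhom hs x hg) ih

theorem derivMon_prod_mem_span_prodDerivGenerators (hhom : ∀ j, (Q j).IsHomogeneous (dg j))
    (hs : ∀ j, ∀ u ∈ (Q j).support, #u.support ≤ s) (γ : σ →₀ ℕ) :
    derivMon γ (∏ j, Q j) ∈ Submodule.span R (prodDerivGenerators Q dg s γ.degree) := by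
  have := derivList_prod_mem_span_prodDerivGenerators hhom hs γ.toMultiset.toList
  rwa [Multiset.length_toList, Finsupp.card_toMultiset] at this

end ProdDeriv

section Shifted

variable {R σ ι : Type*} [CommSemiring R] [DecidableEq R] [Fintype σ] [DecidableEq σ]
  [Fintype ι] [DecidableEq ι] (Q : ι → MvPolynomial σ R) (dg : ι → ℕ) (s : ℕ)

noncomputable def shiftedProdGenerators (r ℓ m : ℕ) : Finset (MvPolynomial σ R) :=
  ({A : Finset ι | #Aᶜ ≤ r} : Finset (Finset ι)).biUnion fun A =>
    ({c ∈ (Finset.univ : Finset σ).finsuppAntidiag (ℓ + ∑ j, dg j - r - ∑ j ∈ A, dg j) |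
      #c.support ∈ Finset.Icc m (m + r * s)}).image fun c => monomial c 1 * ∏ j ∈ A, Q j

variable {Q dg s}

theorem monomial_mul_mem_shiftedProdGenerators {r ℓ m : ℕ} {e : σ →₀ ℕ} (he : e.degree = ℓ)
    (hem : #e.support = m) {g : MvPolynomial σ R} (hg : g ∈ prodDerivGenerators Q dg s r) :
    monomial e 1 * g ∈ shiftedProdGenerators Q dg s r ℓ m := by
  obtain ⟨A, c, hA, hc, hdeg, rfl⟩ := hg
  have hsupp_le : #(e + c).support ≤ #e.support + #c.support :=
    (Finset.card_le_card Finsupp.support_add).trans (Finset.card_union_le _ _)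
  have hsupp_ge : #e.support ≤ #(e + c).support :=
    Finset.card_le_card (by rw [Finsupp.support_add_eq_union]; exact Finset.subset_union_left)
  have hcs : #Aᶜ * s ≤ r * s := Nat.mul_le_mul_right s hA
  refine Finset.mem_biUnion.mpr ⟨A, Finset.mem_filter.mpr ⟨Finset.mem_univ _, hA⟩,
    Finset.mem_image.mpr ⟨e + c, Finset.mem_filter.mpr ⟨?_, ?_⟩, ?_⟩⟩
  · rw [Finset.mem_univ_finsuppAntidiag, map_add]
    omega
  · exact Finset.mem_Icc.mpr ⟨by omega, by omega⟩
  · rw [← mul_assoc, monomial_mul, mul_one]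

theorem shiftedSpan_prod_le (hhom : ∀ j, (Q j).IsHomogeneous (dg j))
    (hs : ∀ j, ∀ u ∈ (Q j).support, #u.support ≤ s) (r ℓ m : ℕ) :
    shiftedSpan r ℓ m (∏ j, Q j) ≤ Submodule.span R ↑(shiftedProdGenerators Q dg s r ℓ m) := by
  refine Submodule.span_le.mpr ?_
  rintro _ ⟨e, γ, he, hem, hγ, rfl⟩
  have hγ' := derivMon_prod_mem_span_prodDerivGenerators hhom hs γ
  rw [← monDeg_eq_degree, hγ] at hγ'
  exact Submodule.apply_mem_of_mem_span (LinearMap.mulLeft R (monomial e 1))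
    (fun g hg => Submodule.subset_span (monomial_mul_mem_shiftedProdGenerators he hem hg)) hγ'

theorem card_shiftedProdGenerators_le {r ℓ m : ℕ} (hm : 1 ≤ m)
    (hσ : 2 * (m + r * s) ≤ Fintype.card σ) (hℓ : 2 * (m + r * s - 1) ≤ ℓ + ∑ j, dg j - r - 1) :
    #(shiftedProdGenerators Q dg s r ℓ m) ≤ (Fintype.card ι + r).choose r * ((r * s + 1) *
      ((Fintype.card σ).choose (m + r * s) * (ℓ + ∑ j, dg j - r - 1).choose (m + r * s - 1))) := by
  set bound := (r * s + 1) *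
    ((Fintype.card σ).choose (m + r * s) * (ℓ + ∑ j, dg j - r - 1).choose (m + r * s - 1))
  calc _ ≤ ∑ A ∈ ({A : Finset ι | #Aᶜ ≤ r} : Finset (Finset ι)),
        #{c ∈ (Finset.univ : Finset σ).finsuppAntidiag (ℓ + ∑ j, dg j - r - ∑ j ∈ A, dg j) |
          #c.support ∈ Finset.Icc m (m + r * s)} :=
        Finset.card_biUnion_le.trans (Finset.sum_le_sum fun A _ => Finset.card_image_le)
    _ ≤ ∑ _A ∈ ({A : Finset ι | #Aᶜ ≤ r} : Finset (Finset ι)), bound :=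
        Finset.sum_le_sum fun A _ =>
          Finset.card_finsuppAntidiag_filter_card_support_mem_Icc_le hm (Nat.sub_le _ _) hσ hℓ
    _ ≤ _ := by
        rw [Finset.sum_const, smul_eq_mul]
        exact Nat.mul_le_mul_right _ (Finset.card_filter_card_compl_le r)

end Shifted

theorem stmt4_general {F : Type} [Field F] {N n s T : ℕ}
    (Q : Fin T → Fin n → MvPolynomial (Fin N) F) (deg : Fin T → Fin n → ℕ)
    (hhom : ∀ i j, (Q i j).IsHomogeneous (deg i j))
    (hdegsum : ∀ i, ∑ j, deg i j = n)
    (hsupp : ∀ i j, ∀ u ∈ (Q i j).support, u.support.card ≤ s)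
    (r ℓ m : ℕ) (hrn : r ≤ n) (hm : 0 < m)
    (hN : 2 * (m + r * s) ≤ N) (hℓ2 : 2 * (m + r * s) ≤ ℓ) :
    Module.finrank F (shiftedSpan r ℓ m (∑ i, ∏ j, Q i j)) ≤
      T * ((n - r + 1) * (r * s + 1) * (n + r).choose r * N.choose (m + r * s) *
        (ℓ + n - r - 1).choose (m + r * s - 1)) := by
  classical
  let G i := shiftedProdGenerators (Q i) (deg i) s r ℓ m
  have hspan : shiftedSpan r ℓ m (∑ i, ∏ j, Q i j) ≤
      Submodule.span F ↑(Finset.univ.biUnion G) := by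
    refine (shiftedSpan_sum_le r ℓ m _ _).trans (iSup₂_le fun i _ =>
      (shiftedSpan_prod_le (hhom i) (hsupp i) r ℓ m).trans (Submodule.span_mono ?_))
    exact_mod_cast Finset.subset_biUnion_of_mem G (Finset.mem_univ i)
  have hG : ∀ i, #(G i) ≤ (n + r).choose r *
      ((r * s + 1) * (N.choose (m + r * s) * (ℓ + n - r - 1).choose (m + r * s - 1))) := by
    intro i
    simpa [hdegsum i] using card_shiftedProdGenerators_le (Q := Q i) (dg := deg i) hm
      (by simpa using hN) (by rw [hdegsum i]; omega)
  calc Module.finrank F (shiftedSpan r ℓ m (∑ i, ∏ j, Q i j))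
      ≤ #(Finset.univ.biUnion G) :=
        (Submodule.finrank_mono hspan).trans (finrank_span_finset_le_card _)
    _ ≤ ∑ i, #(G i) := Finset.card_biUnion_le
    _ ≤ T * ((n + r).choose r *
          ((r * s + 1) * (N.choose (m + r * s) * (ℓ + n - r - 1).choose (m + r * s - 1)))) :=
        (Finset.sum_le_sum fun i _ => hG i).trans_eq (by simp)
    _ ≤ _ := Nat.mul_le_mul_left T ((Nat.le_mul_of_pos_left _ (by omega : 0 < n - r + 1)).trans_eq
        (by ring))

/-- Upper bound on the complexity of a bounded bottom support
homogeneous ΣΠΣΠ circuit: if `C = Σ_{i=1}^T Π_{j=1}^n Q_{i,j}` with each `Q_{i,j}`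
homogeneous, `Σ_j deg Q_{i,j} = n` for each `i`, and every monomial of every `Q_{i,j}`
of support at most `s`, then for positive `r ≤ n`, `ℓ`, `m` with `m + rs ≤ N/2` and
`m + rs ≤ ℓ/2`:
`Dim⟨∂^r C⟩_{(ℓ,m)} ≤ T (n-r+1)(rs+1) C(n+r,r) C(N,m+rs) C(ℓ+n-r-1, m+rs-1)`. -/
theorem stmt4 {F : Type} [Field F] {N n s T : ℕ}
    (Q : Fin T → Fin n → MvPolynomial (Fin N) F) (deg : Fin T → Fin n → ℕ)
    (hhom : ∀ i j, (Q i j).IsHomogeneous (deg i j))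
    (hdegsum : ∀ i, ∑ j, deg i j = n)
    (hsupp : ∀ i j, ∀ u ∈ (Q i j).support, u.support.card ≤ s)
    (r ℓ m : ℕ) (hr : 0 < r) (hrn : r ≤ n) (hℓ : 0 < ℓ) (hm : 0 < m)
    (hN : 2 * (m + r * s) ≤ N) (hℓ2 : 2 * (m + r * s) ≤ ℓ) :
    Module.finrank F (shiftedSpan r ℓ m (∑ i, ∏ j, Q i j)) ≤
      T * ((n - r + 1) * (r * s + 1) * (n + r).choose r * N.choose (m + r * s) *
        (ℓ + n - r - 1).choose (m + r * s - 1)) :=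
  stmt4_general Q deg hhom hdegsum hsupp r ℓ m hrn hm hN hℓ2
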